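/- The closed-form Gaussian divergence Ψ(P,Q) is nonnegative whenever σ_p, σ_q > 1/(2√π), and equals 0 if and only if μ_p = μ_q and σ_p = σ_q. -/

import Mathlib

open Real

/-- Closed-form hyperbolic Gaussian divergence. -/
noncomputable def PsiClosed (μp μq σp σq : ℝ) : ℝ :=
  (1 / (σp * Real.sqrt Real.pi) -
      2 * Real.sqrt 2 *
        (Real.exp (-((μp - μq) ^ 2) / (2 * (σp ^ 2 + σq ^ 2))) /
          Real.sqrt (Real.pi * (σp ^ 2 + σq ^ 2))) +
      1 / (σq * Real.sqrt Real.pi)) /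
    ((1 - 1 / (2 * σp * Real.sqrt Real.pi)) * (1 - 1 / (2 * σq * Real.sqrt Real.pi)))

/-!
Up to the positive factor `√π` and the denominator, which is positive because
`σ > 1 / (2√π)`, the numerator of `Ψ` splits as `scaleGap σp σq + locationGap (μp - μq) s`
with `s = σp² + σq²`. The location term is nonnegative because `exp` of a nonpositive number
is at most `1`, and vanishes exactly when `μp = μq`. The scale term is nonnegative, vanishing
exactly when `σp = σq`, by the identity
`(1/a + 1/b)² - 8/(a² + b²) = (a - b)² (a² + b² + 4ab) / (a² b² (a² + b²))`.
-/

noncomputable def scaleGap (a b : ℝ) : ℝ :=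
  1 / a + 1 / b - 2 * √2 / √(a ^ 2 + b ^ 2)

noncomputable def locationGap (d s : ℝ) : ℝ :=
  2 * √2 * (1 - exp (-d ^ 2 / (2 * s))) / √s

lemma psiClosed_eq_gap_sum (μp μq σp σq : ℝ) :
    PsiClosed μp μq σp σq =
      (scaleGap σp σq + locationGap (μp - μq) (σp ^ 2 + σq ^ 2)) / √π /
        ((1 - 1 / (2 * σp * √π)) * (1 - 1 / (2 * σq * √π))) := by
  rw [PsiClosed, scaleGap, locationGap, sqrt_mul pi_pos.le]
  ring

lemma one_sub_one_div_two_mul_mul_pos {c σ : ℝ} (hc : 0 < c) (hσ : 1 / (2 * c) < σ) :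
    0 < 1 - 1 / (2 * σ * c) := by
  have hσc : 1 < 2 * σ * c := by
    rw [div_lt_iff₀ (by positivity)] at hσ
    linarith
  rw [sub_pos, div_lt_one (by linarith)]
  exact hσc

lemma sq_one_div_add_one_div_sub_sq {a b : ℝ} (ha : 0 < a) (hb : 0 < b) :
    (1 / a + 1 / b) ^ 2 - (2 * √2 / √(a ^ 2 + b ^ 2)) ^ 2 =
      (a - b) ^ 2 * (a ^ 2 + b ^ 2 + 4 * a * b) / (a ^ 2 * b ^ 2 * (a ^ 2 + b ^ 2)) := by
  rw [div_pow, mul_pow, sq_sqrt zero_le_two, sq_sqrt (by positivity)]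
  field_simp
  ring

lemma scaleGap_nonneg {a b : ℝ} (ha : 0 < a) (hb : 0 < b) : 0 ≤ scaleGap a b := by
  have hsq := sq_one_div_add_one_div_sub_sq ha hb
  have hdiff : (2 * √2 / √(a ^ 2 + b ^ 2)) ^ 2 ≤ (1 / a + 1 / b) ^ 2 := by
    rw [← sub_nonneg, hsq]
    positivity
  rw [scaleGap, sub_nonneg]
  exact (pow_le_pow_iff_left₀ (by positivity) (by positivity) two_ne_zero).1 hdiff

lemma scaleGap_eq_zero_iff {a b : ℝ} (ha : 0 < a) (hb : 0 < b) : scaleGap a b = 0 ↔ a = b := by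
  have hsq := sq_one_div_add_one_div_sub_sq ha hb
  rw [scaleGap, sub_eq_zero, ← sq_eq_sq₀ (by positivity) (by positivity), ← sub_eq_zero, hsq,
    div_eq_zero_iff, mul_eq_zero, pow_eq_zero_iff two_ne_zero, sub_eq_zero]
  have : a ^ 2 + b ^ 2 + 4 * a * b ≠ 0 := by positivity
  have : a ^ 2 * b ^ 2 * (a ^ 2 + b ^ 2) ≠ 0 := by positivity
  tauto

lemma exp_neg_sq_div_le_one (d : ℝ) {c : ℝ} (hc : 0 ≤ c) : exp (-d ^ 2 / c) ≤ 1 := by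
  rw [exp_le_one_iff, neg_div]
  exact neg_nonpos.2 (by positivity)

lemma locationGap_nonneg (d : ℝ) {s : ℝ} (hs : 0 ≤ s) : 0 ≤ locationGap d s := by
  have := exp_neg_sq_div_le_one d (by positivity : 0 ≤ 2 * s)
  unfold locationGap
  have : 0 ≤ 1 - exp (-d ^ 2 / (2 * s)) := by linarith
  positivity

lemma locationGap_eq_zero_iff (d : ℝ) {s : ℝ} (hs : 0 < s) : locationGap d s = 0 ↔ d = 0 := by
  rw [locationGap, div_eq_zero_iff, mul_eq_zero, sub_eq_zero, @eq_comm _ 1, exp_eq_one_iff,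
    neg_div, neg_eq_zero, div_eq_zero_iff, pow_eq_zero_iff two_ne_zero]
  have : 2 * √2 ≠ 0 := by positivity
  have : 2 * s ≠ 0 := by positivity
  have : √s ≠ 0 := by positivity
  tauto

theorem psi_nonneg_and_eq_zero_iff (μp μq σp σq : ℝ)
    (hσp : σp > 1 / (2 * Real.sqrt Real.pi)) (hσq : σq > 1 / (2 * Real.sqrt Real.pi)) :
    0 ≤ PsiClosed μp μq σp σq ∧
      (PsiClosed μp μq σp σq = 0 ↔ μp = μq ∧ σp = σq) := by
  have hπ : 0 < √π := sqrt_pos.2 pi_pos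
  have hp : 0 < σp := lt_trans (by positivity) hσp
  have hq : 0 < σq := lt_trans (by positivity) hσq
  have hs : 0 < σp ^ 2 + σq ^ 2 := by positivity
  have hD : 0 < (1 - 1 / (2 * σp * √π)) * (1 - 1 / (2 * σq * √π)) :=
    mul_pos (one_sub_one_div_two_mul_mul_pos hπ hσp) (one_sub_one_div_two_mul_mul_pos hπ hσq)
  have hscale := scaleGap_nonneg hp hq
  have hloc := locationGap_nonneg (μp - μq) hs.le
  rw [psiClosed_eq_gap_sum]
  refine ⟨by positivity, ?_⟩
  rw [div_eq_zero_iff, div_eq_zero_iff, add_eq_zero_iff_of_nonneg hscale hloc,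
    scaleGap_eq_zero_iff hp hq, locationGap_eq_zero_iff _ hs, sub_eq_zero]
  simp only [hπ.ne', hD.ne', or_false]
  exact and_comm
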